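/- arXiv:1907.03730 — 2 statements merged into one kernel-verified Lean document; each statement's English description precedes it below -/
import Mathlib

section
/- Let V be a finite set with |V| = m, and let f, m₀ be natural numbers with m ≤ 3·f, f ≤ m, and 3·m₀ ≤ 2·m. Then there exist pairwise disjoint sets F, Q₁, Q₂ ⊆ V with F ∪ Q₁ ∪ Q₂ = V, |F| = f, |F| + |Q₁| ≥ m₀ and |F| + |Q₂| ≥ m₀; in other words, the adversary's coalition F together with each half of a suitable partition of the correct validators forms a quorum of size at least m₀, so two conflicting transactions tx and tx' spending the same coin can both be validated. (This is the safety half of the counting argument in Theorem 13 of the paper — Resilience optimality — showing that any commit threshold m₀ ≤ 2m/3 permits a double spend when f ≥ m/3.) -/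
/-!
Let `F` be any `f` validators and split the remaining `m - f` validators into `Q₁` of size
`m₀ - f` (truncated at `0`) and `Q₂`, the rest. Then `F ∪ Q₁` reaches `m₀` by construction, and
`F ∪ Q₂` has `m - (m₀ - f)` members, which is at least `m₀` because `2·m₀ ≤ 4m/3 ≤ m + f`.
-/

theorem Finset.exists_disjoint_union_eq_card_eq {α : Type*} [DecidableEq α] (s : Finset α)
    {k : ℕ} (hk : k ≤ s.card) :
    ∃ t u : Finset α, Disjoint t u ∧ t ∪ u = s ∧ t.card = k ∧ u.card = s.card - k := by
  obtain ⟨t, hts, rfl⟩ := Finset.exists_subset_card_eq hk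
  exact ⟨t, s \ t, Finset.disjoint_sdiff, Finset.union_sdiff_of_subset hts, rfl,
    Finset.card_sdiff_of_subset hts⟩

/-- Safety half of Theorem 13 (Resilience optimality): if `f ≥ m/3`
(i.e. `m ≤ 3·f`), `f ≤ m`, and the commit threshold satisfies `m₀ ≤ 2m/3`
(i.e. `3·m₀ ≤ 2·m`), then the validator set `V` of size `m` can be
partitioned into pairwise disjoint `F`, `Q₁`, `Q₂` with `|F| = f` such that
`F ∪ Q₁` and `F ∪ Q₂` both reach the threshold `m₀`, permitting a double
spend. -/
theorem double_spend_partition {α : Type*} [DecidableEq α]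
    (V : Finset α) (m f m₀ : ℕ)
    (hV : V.card = m)
    (hf : m ≤ 3 * f) (hfm : f ≤ m) (hm₀ : 3 * m₀ ≤ 2 * m) :
    ∃ F Q₁ Q₂ : Finset α,
      Disjoint F Q₁ ∧ Disjoint F Q₂ ∧ Disjoint Q₁ Q₂ ∧
      F ∪ Q₁ ∪ Q₂ = V ∧
      F.card = f ∧
      m₀ ≤ F.card + Q₁.card ∧
      m₀ ≤ F.card + Q₂.card := by
  obtain ⟨F, R, hFR, hFRV, hF, hR⟩ := V.exists_disjoint_union_eq_card_eq (k := f) (by omega)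
  obtain ⟨Q₁, Q₂, hQ, hQR, hQ₁, hQ₂⟩ := R.exists_disjoint_union_eq_card_eq (k := m₀ - f) (by omega)
  subst hQR
  obtain ⟨hFQ₁, hFQ₂⟩ := Finset.disjoint_union_right.mp hFR
  refine ⟨F, Q₁, Q₂, hFQ₁, hFQ₂, hQ, by rw [Finset.union_assoc, hFRV], hF, ?_, ?_⟩ <;> omega
end

section
/- For all natural numbers m and f with f ≤ m, the following are equivalent: (i) there exists a commit threshold m₀ with m₀ ≤ m − f (liveness: the correct validators alone can reach the threshold) and m + f + 1 ≤ 2·m₀ (safety: any two sets of at least m₀ validators out of m intersect in strictly more than f elements, hence in a correct validator); (ii) 3·f < m. (This arithmetic equivalence is the quantitative content of Theorem 13 of the paper — Resilience optimality: an offchain protocol tolerating both adversarial silence and double-signing exists exactly when strictly fewer than a third of the m_v validators are Byzantine, matching the choice m₀ = ⌊2m/3⌋ + 1.) -/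
/-! Safety only asks the threshold to be large and liveness caps it at `m - f`, so the best
threshold is `m₀ = m - f`, and the question becomes `m + f + 1 ≤ 2 (m - f)`, i.e. `3 f < m`. -/

theorem Monotone.exists_le_and_le_iff {α β : Type*} [Preorder α] [Preorder β] {g : α → β}
    (hg : Monotone g) (n : α) (k : β) : (∃ x, x ≤ n ∧ k ≤ g x) ↔ k ≤ g n :=
  ⟨fun ⟨_, hxn, hkx⟩ => hkx.trans (hg hxn), fun hkn => ⟨n, le_rfl, hkn⟩⟩

theorem resilience_optimality_iff_general (m f : ℕ) :
    (∃ m₀ : ℕ, m₀ ≤ m - f ∧ m + f + 1 ≤ 2 * m₀) ↔ 3 * f < m := by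
  have double_mono : Monotone (2 * · : ℕ → ℕ) := fun _ _ h => Nat.mul_le_mul_left 2 h
  rw [double_mono.exists_le_and_le_iff]
  omega

/-- Quantitative content of Theorem 13 (Resilience optimality): with `m`
validators of which `f ≤ m` are Byzantine, there exists a commit threshold
`m₀` guaranteeing both liveness (`m₀ ≤ m − f`) and safety
(`m + f + 1 ≤ 2·m₀`, i.e. any two `m₀`-quorums intersect in more than `f`
validators) if and only if `3·f < m`. -/
theorem resilience_optimality_iff (m f : ℕ) (hfm : f ≤ m) :
    (∃ m₀ : ℕ, m₀ ≤ m - f ∧ m + f + 1 ≤ 2 * m₀) ↔ 3 * f < m :=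
  resilience_optimality_iff_general m f
end
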